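/- If r, s are independent random variables each with density f(x) = 4x·exp(−2x²) on [0,∞), then η = r − s has probability density R(η) = (1/2)[2|η| + √π·e^{η²}·(1−2η²)·(1−erf(|η|))]·e^{−2η²} on ℝ. -/

import Mathlib

/-!
The law of `X - Y` is the law of `X` convolved with that of `-Y`, so its density is the
cross-correlation `η ↦ ∫ f x * f (x - η) dx`. This is even in `η`, and for `η ≥ 0` the
integrand `16 x (x - η) exp (-2x² - 2(x - η)²)` is supported on `(η, ∞)`. Completing the square,
`-2x² - 2(x - η)² = -η² - 4(x - η/2)²`, yields an explicit primitive: a Gaussian term plus a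
multiple of `erf (2x - η)`. Its limit at `∞` minus its value at `η` is the claimed density.
-/

open MeasureTheory Real Set ProbabilityTheory

/-- The error function. -/
noncomputable def erf (x : ℝ) : ℝ := (2 / Real.sqrt π) * ∫ t in (0:ℝ)..x, Real.exp (-t ^ 2)

open Filter
open scoped ENNReal Topology

theorem MeasureTheory.Measure.map_neg_withDensity {G : Type*} [InvolutiveNeg G]
    [MeasurableSpace G] [MeasurableNeg G] {μ : Measure G} [μ.IsNegInvariant] {g : G → ℝ≥0∞}
    (hg : Measurable g) : (μ.withDensity g).map Neg.neg = μ.withDensity (fun x => g (-x)) := by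
  ext s hs
  rw [Measure.map_apply measurable_neg hs, withDensity_apply _ (measurable_neg hs),
    withDensity_apply _ hs,
    ← (Measure.measurePreserving_neg μ).setLIntegral_comp_preimage (measurable_neg hs) hg]
  simp

theorem ProbabilityTheory.IndepFun.map_sub_eq_withDensity_lintegral {G Ω : Type*}
    [AddCommGroup G] [MeasurableSpace G] [MeasurableAdd₂ G] [MeasurableNeg G]
    {μ : Measure G} [SFinite μ] [μ.IsAddLeftInvariant] [μ.IsNegInvariant]
    [MeasurableSpace Ω] {P : Measure Ω} [IsFiniteMeasure P] {X Y : Ω → G}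
    (hX : Measurable X) (hY : Measurable Y) (hXY : IndepFun X Y P) {f g : G → ℝ≥0∞}
    (hf : Measurable f) (hg : Measurable g)
    (hXf : P.map X = μ.withDensity f) (hYg : P.map Y = μ.withDensity g) :
    P.map (X - Y) = μ.withDensity (fun η => ∫⁻ x, f x * g (x - η) ∂μ) := by
  have hnegY : P.map (-Y) = μ.withDensity (fun x => g (-x)) := by
    rw [show -Y = Neg.neg ∘ Y from rfl, ← Measure.map_map measurable_neg hY, hYg,
      Measure.map_neg_withDensity hg]
  rw [sub_eq_add_neg, (hXY.comp measurable_id measurable_neg).map_add_eq_map_conv_map hX hY.neg,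
    hXf, hnegY, conv_withDensity_eq_lconvolution hf (by fun_prop)]
  congr with η
  simp [lconvolution_def, neg_add_eq_sub]

theorem hasDerivAt_erf (x : ℝ) : HasDerivAt erf (2 / √π * exp (-x ^ 2)) x := by
  have hc : Continuous fun t : ℝ => exp (-t ^ 2) := by fun_prop
  exact (intervalIntegral.integral_hasDerivAt_right (hc.intervalIntegrable 0 x)
    hc.stronglyMeasurable.stronglyMeasurableAtFilter hc.continuousAt).const_mul _

theorem tendsto_erf_atTop : Tendsto erf atTop (𝓝 1) := by
  have hI : ∫ t in Ioi (0:ℝ), exp (-t ^ 2) = √π / 2 := by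
    simpa using integral_gaussian_Ioi 1
  have h := (intervalIntegral_tendsto_integral_Ioi 0
    (by simpa using (integrable_exp_neg_mul_sq one_pos).integrableOn) tendsto_id).const_mul
    (2 / √π)
  rw [hI, div_mul_div_cancel₀ (by positivity), div_self two_ne_zero] at h
  exact h

-- The Rayleigh density with scale `σ = 1/2`.
noncomputable def rayleighPDF (x : ℝ) : ℝ :=
  (Ici 0).indicator (fun x => 4 * x * exp (-2 * x ^ 2)) x

noncomputable def rayleighDiffPDF (η : ℝ) : ℝ :=
  (1 / 2) * (2 * |η| + √π * exp (η ^ 2) * (1 - 2 * η ^ 2) * (1 - erf |η|)) *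
    exp (-2 * η ^ 2)

theorem rayleighPDF_of_nonneg {x : ℝ} (hx : 0 ≤ x) : rayleighPDF x = 4 * x * exp (-2 * x ^ 2) :=
  indicator_of_mem hx _

theorem rayleighPDF_of_nonpos {x : ℝ} (hx : x ≤ 0) : rayleighPDF x = 0 := by
  rcases hx.lt_or_eq with hx | rfl
  · exact indicator_of_notMem (not_le.2 hx) _
  · simp [rayleighPDF]

theorem rayleighPDF_nonneg (x : ℝ) : 0 ≤ rayleighPDF x :=
  indicator_nonneg (fun y (hy : 0 ≤ y) => by positivity) x

theorem measurable_rayleighPDF : Measurable rayleighPDF :=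
  (by fun_prop : Measurable fun x : ℝ => 4 * x * exp (-2 * x ^ 2)).indicator measurableSet_Ici

theorem rayleighPDF_mul_rayleighPDF_sub {η : ℝ} (hη : 0 ≤ η) (x : ℝ) :
    rayleighPDF x * rayleighPDF (x - η) =
      (Ioi η).indicator (fun x => 16 * x * (x - η) * exp (-2 * x ^ 2 - 2 * (x - η) ^ 2)) x := by
  by_cases hx : η < x
  · rw [indicator_of_mem (show x ∈ Ioi η from hx), rayleighPDF_of_nonneg (by linarith),
      rayleighPDF_of_nonneg (by linarith), sub_eq_add_neg _ (2 * _), exp_add]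
    ring_nf
  · rw [indicator_of_notMem (show x ∉ Ioi η from hx),
      rayleighPDF_of_nonpos (x := x - η) (by linarith [not_lt.1 hx]), mul_zero]

theorem rayleighDiffPDF_neg (η : ℝ) : rayleighDiffPDF (-η) = rayleighDiffPDF η := by
  simp [rayleighDiffPDF]

noncomputable def rayleighCorrPrimitive (η x : ℝ) : ℝ :=
  -2 * exp (-η ^ 2) * ((x - η / 2) * exp (-4 * (x - η / 2) ^ 2))
    + (2 - 4 * η ^ 2) * exp (-η ^ 2) * (√π / 4) * erf (2 * x - η)

theorem hasDerivAt_rayleighCorrPrimitive (η x : ℝ) :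
    HasDerivAt (rayleighCorrPrimitive η)
      (16 * x * (x - η) * exp (-2 * x ^ 2 - 2 * (x - η) ^ 2)) x := by
  have hu := (hasDerivAt_id x).sub_const (η / 2)
  have h := ((hu.mul ((hu.pow 2).const_mul (-4)).exp).const_mul (-2 * exp (-η ^ 2))).add
    (((hasDerivAt_erf _).comp x (((hasDerivAt_id x).const_mul 2).sub_const η)).const_mul
      ((2 - 4 * η ^ 2) * exp (-η ^ 2) * (√π / 4)))
  refine h.congr_deriv ?_
  have e1 : -2 * x ^ 2 - 2 * (x - η) ^ 2 = -η ^ 2 + -4 * (x - η / 2) ^ 2 := by ring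
  have e2 : -(2 * x - η) ^ 2 = -4 * (x - η / 2) ^ 2 := by ring
  simp only [id, e1, e2, exp_add, Pi.pow_apply]
  field_simp
  ring

theorem tendsto_rayleighCorrPrimitive_atTop (η : ℝ) :
    Tendsto (rayleighCorrPrimitive η) atTop
      (𝓝 ((2 - 4 * η ^ 2) * exp (-η ^ 2) * (√π / 4))) := by
  have hgauss : Tendsto (fun u : ℝ => u * exp (-4 * u ^ 2)) atTop (𝓝 0) := by
    refine ((tendsto_rpow_abs_mul_exp_neg_mul_sq_cocompact (by norm_num : (0:ℝ) < 4) 1).mono_left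
      atTop_le_cocompact).congr' ?_
    filter_upwards [eventually_ge_atTop 0] with u hu
    simp [abs_of_nonneg hu]
  have hshift : Tendsto (fun x : ℝ => x - η / 2) atTop atTop :=
    tendsto_atTop_add_const_right _ _ tendsto_id
  have hlin : Tendsto (fun x : ℝ => 2 * x - η) atTop atTop :=
    tendsto_atTop_add_const_right _ _ (tendsto_id.const_mul_atTop two_pos)
  have h := ((hgauss.comp hshift).const_mul (-2 * exp (-η ^ 2))).add
    ((tendsto_erf_atTop.comp hlin).const_mul ((2 - 4 * η ^ 2) * exp (-η ^ 2) * (√π / 4)))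
  rwa [mul_zero, zero_add, mul_one] at h

theorem rayleighDiffPDF_eq_sub_rayleighCorrPrimitive {η : ℝ} (hη : 0 ≤ η) :
    rayleighDiffPDF η =
      (2 - 4 * η ^ 2) * exp (-η ^ 2) * (√π / 4) - rayleighCorrPrimitive η η := by
  have e1 : exp (-2 * η ^ 2) = exp (-η ^ 2) * exp (-η ^ 2) := by rw [← exp_add]; ring_nf
  have e2 : exp (η ^ 2) * exp (-2 * η ^ 2) = exp (-η ^ 2) := by rw [← exp_add]; ring_nf
  rw [rayleighDiffPDF, rayleighCorrPrimitive, abs_of_nonneg hη,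
    show -4 * (η - η / 2) ^ 2 = -η ^ 2 by ring, show 2 * η - η = η by ring]
  linear_combination η * e1 + ((√π / 2) * (1 - 2 * η ^ 2) * (1 - erf η)) * e2

theorem lintegral_rayleighPDF_mul_sub_of_nonneg {η : ℝ} (hη : 0 ≤ η) :
    ∫⁻ x, ENNReal.ofReal (rayleighPDF x) * ENNReal.ofReal (rayleighPDF (x - η)) =
      ENNReal.ofReal (rayleighDiffPDF η) := by
  have hderiv : ∀ x ∈ Ici η, HasDerivAt (rayleighCorrPrimitive η)
      (16 * x * (x - η) * exp (-2 * x ^ 2 - 2 * (x - η) ^ 2)) x :=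
    fun x _ => hasDerivAt_rayleighCorrPrimitive η x
  have hpos : ∀ x ∈ Ioi η, 0 ≤ 16 * x * (x - η) * exp (-2 * x ^ 2 - 2 * (x - η) ^ 2) := by
    intro x (hx : η < x)
    have : 0 ≤ x - η := by linarith
    have : 0 ≤ x := by linarith
    positivity
  have hint :=
    integrableOn_Ioi_deriv_of_nonneg' hderiv hpos (tendsto_rayleighCorrPrimitive_atTop η)
  simp_rw [← ENNReal.ofReal_mul (rayleighPDF_nonneg _), rayleighPDF_mul_rayleighPDF_sub hη,
    ← ofReal_integral_eq_lintegral_ofReal ((integrable_indicator_iff measurableSet_Ioi).2 hint)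
      (Eventually.of_forall fun x => indicator_nonneg hpos x),
    integral_indicator measurableSet_Ioi,
    integral_Ioi_of_hasDerivAt_of_nonneg' hderiv hpos (tendsto_rayleighCorrPrimitive_atTop η),
    rayleighDiffPDF_eq_sub_rayleighCorrPrimitive hη]

theorem lintegral_rayleighPDF_mul_sub (η : ℝ) :
    ∫⁻ x, ENNReal.ofReal (rayleighPDF x) * ENNReal.ofReal (rayleighPDF (x - η)) =
      ENNReal.ofReal (rayleighDiffPDF η) := by
  rcases le_total 0 η with hη | hη
  · exact lintegral_rayleighPDF_mul_sub_of_nonneg hη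
  · rw [← rayleighDiffPDF_neg, ← lintegral_rayleighPDF_mul_sub_of_nonneg (neg_nonneg.2 hη),
      ← lintegral_add_right_eq_self _ η]
    simp_rw [add_sub_cancel_right, sub_neg_eq_add, mul_comm]

theorem stmt_9 {Ω : Type*} [MeasurableSpace Ω] (P : Measure Ω) [IsProbabilityMeasure P]
    (X Y : Ω → ℝ) (hX : Measurable X) (hY : Measurable Y) (hindep : IndepFun X Y P)
    (hXd : Measure.map X P = volume.withDensity (fun x => ENNReal.ofReal
      (Set.indicator (Set.Ici (0 : ℝ)) (fun x => 4 * x * Real.exp (-2 * x ^ 2)) x)))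
    (hYd : Measure.map Y P = volume.withDensity (fun x => ENNReal.ofReal
      (Set.indicator (Set.Ici (0 : ℝ)) (fun x => 4 * x * Real.exp (-2 * x ^ 2)) x))) :
    Measure.map (fun ω => X ω - Y ω) P = volume.withDensity (fun η => ENNReal.ofReal
      ((1 / 2) * (2 * |η| + Real.sqrt π * Real.exp (η ^ 2) * (1 - 2 * η ^ 2) * (1 - erf |η|)) *
        Real.exp (-2 * η ^ 2))) := by
  have hρ : Measurable fun x => ENNReal.ofReal (rayleighPDF x) :=
    ENNReal.measurable_ofReal.comp measurable_rayleighPDF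
  rw [show (fun ω => X ω - Y ω) = X - Y from rfl,
    hindep.map_sub_eq_withDensity_lintegral hX hY hρ hρ hXd hYd]
  congr with η
  exact lintegral_rayleighPDF_mul_sub η
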